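/- Every element of W_mT admits a tree analysis; precisely, W_mT coincides with the smallest subset C of c₀₀ that contains ±e_n^* for every n and is closed under the (A_{n_j}, m_j^{-1})-operations (for every j ≥ 0 and successive f_1 < ⋯ < f_k in C with k ≤ n_j, the functional m_j^{-1}(f_1 + ⋯ + f_k) belongs to C) and under rational convex combinations of its elements. -/

import Mathlib

/-- The sequence `m_0 = 2`, `m_{j+1} = m_j ^ 5`. -/
def mseq : ℕ → ℕ
  | 0 => 2
  | j + 1 => (mseq j) ^ 5

lemma two_le_mseq (j : ℕ) : 2 ≤ mseq j := by
  induction j with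
  | zero => rfl
  | succ n ih =>
    calc 2 ≤ mseq n := ih
    _ ≤ (mseq n) ^ 5 := Nat.le_self_pow (by norm_num) _

lemma sseq_exists (j : ℕ) : ∃ s : ℕ, 1 ≤ s ∧ (mseq (j + 1)) ^ 3 ≤ 2 ^ s := by
  refine ⟨(mseq (j + 1)) ^ 3, ?_, ?_⟩
  · exact Nat.one_le_pow _ _ (lt_of_lt_of_le (by norm_num) (two_le_mseq (j + 1)))
  · first
    | exact (Nat.lt_two_pow_self).le
    | exact (Nat.lt_two_pow_self _).le

/-- `s_j` is the least positive integer with `2 ^ s_j ≥ m_{j+1} ^ 3`. -/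
def sseq (j : ℕ) : ℕ := Nat.find (sseq_exists j)

/-- The sequence `n_0 = 4`, `n_{j+1} = (12 n_j) ^ {s_j}`. -/
def nseq : ℕ → ℕ
  | 0 => 4
  | j + 1 => (12 * nseq j) ^ (sseq j)

open scoped Classical

/-- `f < g` for finitely supported functions: the supports are successive. -/
def RSucc (f g : ℕ+ →₀ ℝ) : Prop :=
  ∀ a ∈ f.support, ∀ b ∈ g.support, a < b

/-- `Ef`: the restriction of `f` to a set `E` of positive integers (pointwise product
with the indicator of `E`). -/
noncomputable def restr (E : Set ℕ+) (f : ℕ+ →₀ ℝ) : ℕ+ →₀ ℝ :=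
  f.filter (· ∈ E)

/-- `W_mT`: the smallest subset of `c₀₀` containing `±e_n^*`, closed under the
`(A_{n_j}, m_j⁻¹)`-operations, symmetric, closed under restrictions to intervals and
under rational convex combinations. -/
inductive WmT : (ℕ+ →₀ ℝ) → Prop
  | pos (n : ℕ+) : WmT (Finsupp.single n 1)
  | neg_single (n : ℕ+) : WmT (-(Finsupp.single n 1))
  | op (t : ℕ) (l : List (ℕ+ →₀ ℝ)) (hne : l ≠ []) (hchain : l.Chain' RSucc)
      (hmem : ∀ p ∈ l, WmT p) (hlen : l.length ≤ nseq t) :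
      WmT ((mseq t : ℝ)⁻¹ • l.sum)
  | neg (f : ℕ+ →₀ ℝ) (hf : WmT f) : WmT (-f)
  | interval (f : ℕ+ →₀ ℝ) (hf : WmT f) (E : Set ℕ+) (hE : E.OrdConnected) :
      WmT (restr E f)
  | rconv (d : ℕ) (g : Fin d → (ℕ+ →₀ ℝ)) (r : Fin d → ℚ)
      (hg : ∀ i, WmT (g i)) (hr : ∀ i, 0 ≤ r i) (hsum : (∑ i, r i) = 1) :
      WmT (∑ i, (r i : ℝ) • g i)

/-- `C`: the smallest subset of `c₀₀` containing `±e_n^*` and closed under the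
`(A_{n_j}, m_j⁻¹)`-operations and under rational convex combinations (membership in `C`
is the existence of a tree analysis). -/
inductive CmT : (ℕ+ →₀ ℝ) → Prop
  | pos (n : ℕ+) : CmT (Finsupp.single n 1)
  | neg_single (n : ℕ+) : CmT (-(Finsupp.single n 1))
  | op (t : ℕ) (l : List (ℕ+ →₀ ℝ)) (hne : l ≠ []) (hchain : l.Chain' RSucc)
      (hmem : ∀ p ∈ l, CmT p) (hlen : l.length ≤ nseq t) :
      CmT ((mseq t : ℝ)⁻¹ • l.sum)
  | rconv (d : ℕ) (g : Fin d → (ℕ+ →₀ ℝ)) (r : Fin d → ℚ)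
      (hg : ∀ i, CmT (g i)) (hr : ∀ i, 0 ≤ r i) (hsum : (∑ i, r i) = 1) :
      CmT (∑ i, (r i : ℝ) • g i)

lemma restr_apply (E : Set ℕ+) (f : ℕ+ →₀ ℝ) (a : ℕ+) :
    restr E f a = if a ∈ E then f a else 0 := by
  simp [restr, Finsupp.filter_apply]

lemma restr_add (E : Set ℕ+) (f g : ℕ+ →₀ ℝ) :
    restr E (f + g) = restr E f + restr E g := by
  ext a
  simp only [restr_apply, Finsupp.add_apply]
  split <;> simp

lemma restr_zero (E : Set ℕ+) : restr E (0 : ℕ+ →₀ ℝ) = 0 := by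
  ext a; simp [restr_apply]

lemma restr_smul (E : Set ℕ+) (c : ℝ) (f : ℕ+ →₀ ℝ) :
    restr E (c • f) = c • restr E f := by
  ext a
  simp only [restr_apply, Finsupp.smul_apply]
  split <;> simp

lemma restr_neg (E : Set ℕ+) (f : ℕ+ →₀ ℝ) : restr E (-f) = -restr E f := by
  ext a
  simp only [restr_apply, Finsupp.neg_apply]
  split <;> simp

lemma restr_list_sum (E : Set ℕ+) (l : List (ℕ+ →₀ ℝ)) :
    restr E l.sum = (l.map (restr E)).sum := by
  induction l with
  | nil => simpa using restr_zero E
  | cons h t ih => simp [restr_add, ih]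

lemma restr_finsum (E : Set ℕ+) {d : ℕ} (g : Fin d → (ℕ+ →₀ ℝ)) :
    restr E (∑ i, g i) = ∑ i, restr E (g i) := by
  induction d with
  | zero => simpa using restr_zero E
  | succ n ih =>
    rw [Fin.sum_univ_succ, Fin.sum_univ_succ, restr_add, ih]

lemma support_restr_subset (E : Set ℕ+) (f : ℕ+ →₀ ℝ) :
    (restr E f).support ⊆ f.support := by
  intro a ha
  simp only [Finsupp.mem_support_iff, restr_apply] at ha ⊢
  intro h; apply ha; simp [h]

lemma rsucc_restr (E : Set ℕ+) {f g : ℕ+ →₀ ℝ} (h : RSucc f g) :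
    RSucc (restr E f) (restr E g) := fun a ha b hb =>
  h a (support_restr_subset E f ha) b (support_restr_subset E g hb)

lemma rsucc_neg_neg {f g : ℕ+ →₀ ℝ} (h : RSucc f g) : RSucc (-f) (-g) := by
  intro a ha b hb
  exact h a (by simpa using ha) b (by simpa using hb)

lemma list_sum_map_neg (l : List (ℕ+ →₀ ℝ)) :
    (l.map (fun f => -f)).sum = -l.sum := by
  induction l with
  | nil => simp
  | cons h t ih => simp [ih]; abel

lemma czero : CmT 0 := by
  have h := CmT.rconv 2 ![Finsupp.single 1 1, -(Finsupp.single 1 1)] ![1/2, 1/2]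
    (by
      intro i
      fin_cases i
      · exact CmT.pos 1
      · exact CmT.neg_single 1)
    (by intro i; fin_cases i <;> norm_num)
    (by simp [Fin.sum_univ_two]; norm_num)
  simpa [Fin.sum_univ_two, smul_neg] using h

lemma cneg {f : ℕ+ →₀ ℝ} (hf : CmT f) : CmT (-f) := by
  induction hf with
  | pos n => exact CmT.neg_single n
  | neg_single n => simpa using CmT.pos n
  | op t l hne hchain hmem hlen ih =>
    have key : -((mseq t : ℝ)⁻¹ • l.sum)
        = (mseq t : ℝ)⁻¹ • (l.map (fun f => -f)).sum := by
      rw [list_sum_map_neg, smul_neg]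
    rw [key]
    apply CmT.op t _ (by simpa using hne)
    · unfold List.Chain' at hchain ⊢
      rw [List.isChain_map]
      exact hchain.imp (fun a b h => rsucc_neg_neg h)
    · intro p hp
      rcases List.mem_map.mp hp with ⟨q, hq, rfl⟩
      exact ih q hq
    · simpa using hlen
  | rconv d g r hg hr hsum ih =>
    have key : -(∑ i, (r i : ℝ) • g i) = ∑ i, (r i : ℝ) • (-(g i)) := by
      rw [← Finset.sum_neg_distrib]
      congr 1; funext i; rw [smul_neg]
    rw [key]
    exact CmT.rconv d _ r ih hr hsum

lemma crestr (E : Set ℕ+) {f : ℕ+ →₀ ℝ} (hf : CmT f) : CmT (restr E f) := by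
  induction hf with
  | pos n =>
    by_cases h : n ∈ E
    · have : restr E (Finsupp.single n 1) = Finsupp.single n 1 := by
        ext a
        rw [restr_apply]
        rcases eq_or_ne a n with rfl | hne
        · simp [h]
        · simp [Finsupp.single_apply, hne, hne.symm]
      rw [this]; exact CmT.pos n
    · have : restr E (Finsupp.single n 1) = 0 := by
        ext a
        rw [restr_apply]
        rcases eq_or_ne a n with rfl | hne
        · simp [h]
        · simp [Finsupp.single_apply, hne, hne.symm]
      rw [this]; exact czero
  | neg_single n =>
    by_cases h : n ∈ E
    · have : restr E (-(Finsupp.single n 1)) = -(Finsupp.single n 1) := by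
        rw [restr_neg]
        congr 1
        ext a
        rw [restr_apply]
        rcases eq_or_ne a n with rfl | hne
        · simp [h]
        · simp [Finsupp.single_apply, hne, hne.symm]
      rw [this]; exact CmT.neg_single n
    · have : restr E (-(Finsupp.single n 1)) = 0 := by
        rw [restr_neg]
        have : restr E (Finsupp.single n 1) = 0 := by
          ext a
          rw [restr_apply]
          rcases eq_or_ne a n with rfl | hne
          · simp [h]
          · simp [Finsupp.single_apply, hne, hne.symm]
        rw [this, neg_zero]
      rw [this]; exact czero
  | op t l hne hchain hmem hlen ih =>
    rw [restr_smul, restr_list_sum]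
    apply CmT.op t _ (by simpa using hne)
    · unfold List.Chain' at hchain ⊢
      rw [List.isChain_map]
      exact hchain.imp (fun a b h => rsucc_restr E h)
    · intro p hp
      rcases List.mem_map.mp hp with ⟨q, hq, rfl⟩
      exact ih q hq
    · simpa using hlen
  | rconv d g r hg hr hsum ih =>
    rw [restr_finsum]
    have key : ∀ i, restr E ((r i : ℝ) • g i) = (r i : ℝ) • restr E (g i) :=
      fun i => restr_smul E _ _
    rw [Finset.sum_congr rfl (fun i _ => key i)]
    exact CmT.rconv d _ r ih hr hsum

theorem statement12 : ∀ f : ℕ+ →₀ ℝ, WmT f ↔ CmT f := by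
  intro f
  constructor
  · intro hf
    induction hf with
    | pos n => exact CmT.pos n
    | neg_single n => exact CmT.neg_single n
    | op t l hne hchain hmem hlen ih => exact CmT.op t l hne hchain ih hlen
    | neg f hf ih => exact cneg ih
    | interval f hf E hE ih => exact crestr E ih
    | rconv d g r hg hr hsum ih => exact CmT.rconv d g r ih hr hsum
  · intro hf
    induction hf with
    | pos n => exact WmT.pos n
    | neg_single n => exact WmT.neg_single n
    | op t l hne hchain hmem hlen ih => exact WmT.op t l hne hchain ih hlen
    | rconv d g r hg hr hsum ih => exact WmT.rconv d g r ih hr hsum
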